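/- Let Ω ∈ 𝒮² and let k ≥ 1 be an integer. For each 1 ≤ j ≤ k the function p ↦ A_{j,k+1−j}(p) attains a minimum on Ū_Ω; set a := max_{1≤j≤k} min_{p ∈ Ū_Ω} A_{j,k+1−j}(p). Then for every (m₁,m₂) ∈ ℤ² \ (ℤ_{≤0})² with m₁ + m₂ ≤ k+1 and every ε > 0, there exists p ∈ Ū_Ω with A_{m₁,m₂}(p) < a + ε. -/
import Mathlib


open Set Real Filter Topology

noncomputable section

/-- Points of the plane `ℝ²`. -/
abbrev Pt : Type := ℝ × ℝ

/-- The unit quarter circle `Σ² = {v ∈ (ℝ_{≥0})² : |v| = 1}`. -/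
def Sigma2 : Set Pt := {v | 0 ≤ v.1 ∧ 0 ≤ v.2 ∧ v.1 ^ 2 + v.2 ^ 2 = 1}

/-- `Ω ∈ 𝒮²`, witnessed by the radial function `r` (a positive function on `Σ²`,
smooth in the sense that it is `C^∞` on `Σ²` as a subset of `ℝ²`). -/
def IsToricBase (Ω : Set Pt) (r : Pt → ℝ) : Prop :=
  ContDiffOn ℝ (⊤ : ℕ∞) r Sigma2 ∧ (∀ z ∈ Sigma2, 0 < r z) ∧
    Ω = {p | ∃ z ∈ Sigma2, ∃ t : ℝ, 0 ≤ t ∧ t ≤ r z ∧ p = t • z}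

/-- The open positive quadrant `(ℝ_{>0})²`. -/
def posQuad : Set Pt := {p | 0 < p.1 ∧ 0 < p.2}

/-- The closed nonnegative quadrant `(ℝ_{≥0})²`. -/
def nonnegQuad : Set Pt := {p | 0 ≤ p.1 ∧ 0 ≤ p.2}

/-- `U_Ω := (ℝ_{>0})² \ Ω`. -/
def UStar (Ω : Set Pt) : Set Pt := posQuad \ Ω

/-- `Ū_Ω`, the closure of `U_Ω` in `(ℝ_{≥0})²`. -/
def UBar (Ω : Set Pt) : Set Pt := closure (UStar Ω) ∩ nonnegQuad

/-- `A_{m₁,m₂}(y₁,y₂) = m₁ y₁ + m₂ y₂`. -/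
def Afun (m₁ m₂ : ℤ) (p : Pt) : ℝ := m₁ * p.1 + m₂ * p.2

/-- The curve `γ(θ) = ρ_Ω(θ)·(cos θ, sin θ)` parametrizing `∂Ω`. -/
def gammaCurve (r : Pt → ℝ) (θ : ℝ) : Pt :=
  r (Real.cos θ, Real.sin θ) • ((Real.cos θ, Real.sin θ) : Pt)

/-- `∂Ω := {ρ_Ω(θ)·(cos θ, sin θ) : θ ∈ [0,π/2]}`. -/
def bdryOmega (r : Pt → ℝ) : Set Pt := gammaCurve r '' Icc 0 (π / 2)

/-- `∂₊Ω := ∂Ω ∪ {(t,0) : t ≥ ρ_Ω(0)} ∪ {(0,t) : t ≥ ρ_Ω(π/2)}`. -/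
def bdryPlusOmega (r : Pt → ℝ) : Set Pt :=
  bdryOmega r ∪ {p | p.2 = 0 ∧ r (1, 0) ≤ p.1} ∪ {p | p.1 = 0 ∧ r (0, 1) ≤ p.2}

/-- The action spectrum `spec(Ω)`. -/
def spec (r : Pt → ℝ) : Set ℝ :=
  {x | ∃ m : ℤ, 1 ≤ m ∧ x = m * r (1, 0)} ∪
  {x | ∃ m : ℤ, 1 ≤ m ∧ x = m * r (0, 1)} ∪
  {x | ∃ m₁ m₂ : ℤ, ¬(m₁ ≤ 0 ∧ m₂ ≤ 0) ∧ ∃ θ ∈ Icc (0 : ℝ) (π / 2),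
    deriv (fun t => Afun m₁ m₂ (gammaCurve r t)) θ = 0 ∧
    0 < Afun m₁ m₂ (gammaCurve r θ) ∧ x = Afun m₁ m₂ (gammaCurve r θ)}
-- aux lemmas
theorem stmt8_isCompact_Sigma2 : IsCompact Sigma2 := by
  have hsub : Sigma2 ⊆ Icc ((0:ℝ),(0:ℝ)) ((1:ℝ),(1:ℝ)) := by
    rintro ⟨x, y⟩ ⟨hx, hy, hxy⟩
    simp only [mem_Icc, Prod.mk_le_mk]
    refine ⟨⟨hx, hy⟩, ?_, ?_⟩ <;> nlinarith
  have hclosed : IsClosed Sigma2 := by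
    have : Sigma2 = {v : Pt | 0 ≤ v.1} ∩ ({v : Pt | 0 ≤ v.2} ∩ {v : Pt | v.1^2+v.2^2 = 1}) := by
      ext v; simp only [Sigma2, mem_setOf_eq, mem_inter_iff, and_assoc]
    rw [this]
    exact (isClosed_le continuous_const continuous_fst).inter
      ((isClosed_le continuous_const continuous_snd).inter
        (isClosed_eq (by fun_prop) continuous_const))
  exact isCompact_Icc.of_isClosed_subset hclosed hsub

theorem stmt8_notmem (Ω : Set Pt) (r : Pt → ℝ) (hΩ : IsToricBase Ω r) (M : ℝ)
    (hM : ∀ z ∈ Sigma2, r z ≤ M) (p : Pt) (hp : M^2 < p.1^2 + p.2^2) : p ∉ Ω := by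
  intro hmem
  rw [hΩ.2.2] at hmem
  obtain ⟨z, hz, t, ht0, htr, rfl⟩ := hmem
  have h1 := hz.2.2
  have h2 := hM z hz
  have h3 := (hΩ.2.1 z hz).le
  simp only [Prod.smul_fst, Prod.smul_snd, smul_eq_mul] at hp
  nlinarith [sq_nonneg t]

theorem stmt8_axis (Ω : Set Pt) (r : Pt → ℝ) (hΩ : IsToricBase Ω r) (M : ℝ)
    (hM : ∀ z ∈ Sigma2, r z ≤ M) (hM0 : 0 ≤ M) (T : ℝ) (hT : M < T) :
    ((T, 0) : Pt) ∈ UBar Ω ∧ ((0, T) : Pt) ∈ UBar Ω := by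
  have hT0 : 0 < T := lt_of_le_of_lt hM0 hT
  have hseq : Tendsto (fun n : ℕ => (1 : ℝ) / (n + 1)) atTop (𝓝 0) :=
    tendsto_one_div_add_atTop_nhds_zero_nat
  have hpos : ∀ n : ℕ, 0 < (1 : ℝ) / (n + 1) := by
    intro n; positivity
  constructor <;> refine ⟨?_, by constructor <;> simp [hT0.le]⟩
  · refine mem_closure_of_tendsto (f := fun n : ℕ => ((T, 1/(n+1)) : Pt)) (b := atTop) ?_ ?_
    · exact (tendsto_const_nhds.prodMk_nhds hseq)
    · filter_upwards with n
      refine ⟨⟨hT0, hpos n⟩, stmt8_notmem Ω r hΩ M hM _ ?_⟩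
      have := hpos n
      nlinarith
  · refine mem_closure_of_tendsto (f := fun n : ℕ => ((1/(n+1), T) : Pt)) (b := atTop) ?_ ?_
    · exact (hseq.prodMk_nhds tendsto_const_nhds)
    · filter_upwards with n
      refine ⟨⟨hpos n, hT0⟩, stmt8_notmem Ω r hΩ M hM _ ?_⟩
      have := hpos n
      nlinarith

theorem stmt8_closed (Ω : Set Pt) : IsClosed (UBar Ω) := by
  refine isClosed_closure.inter ?_
  have : nonnegQuad = {v : Pt | 0 ≤ v.1} ∩ {v : Pt | 0 ≤ v.2} := rfl
  rw [this]
  exact (isClosed_le continuous_const continuous_fst).inter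
    (isClosed_le continuous_const continuous_snd)

theorem stmt8_min (Ω : Set Pt) (r : Pt → ℝ) (hΩ : IsToricBase Ω r) (M : ℝ)
    (hM : ∀ z ∈ Sigma2, r z ≤ M) (hM0 : 0 ≤ M)
    (m₁ m₂ : ℤ) (h1 : 1 ≤ m₁) (h2 : 1 ≤ m₂) :
    ∃ x : ℝ, IsLeast (Afun m₁ m₂ '' UBar Ω) x := by
  have h1' : (1:ℝ) ≤ (m₁ : ℝ) := by exact_mod_cast h1
  have h2' : (1:ℝ) ≤ (m₂ : ℝ) := by exact_mod_cast h2
  have hfc : Continuous (Afun m₁ m₂) := by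
    unfold Afun; fun_prop
  set p₀ : Pt := (M+1, M+1) with hp₀def
  have hp₀ : p₀ ∈ UBar Ω := by
    refine ⟨subset_closure ⟨⟨by simp [hp₀def]; linarith, by simp [hp₀def]; linarith⟩, ?_⟩,
      by constructor <;> simp [hp₀def] <;> linarith⟩
    exact stmt8_notmem Ω r hΩ M hM _ (by simp [hp₀def]; nlinarith)
  set c : ℝ := Afun m₁ m₂ p₀ with hcdef
  set S : Set Pt := UBar Ω ∩ Afun m₁ m₂ ⁻¹' (Iic c) with hSdef
  have hp₀S : p₀ ∈ S := ⟨hp₀, by simp [hcdef]⟩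
  have hScl : IsClosed S := (stmt8_closed Ω).inter (isClosed_Iic.preimage hfc)
  have hSsub : S ⊆ Icc ((0:ℝ),(0:ℝ)) ((c:ℝ),(c:ℝ)) := by
    rintro ⟨x, y⟩ ⟨⟨_, hx, hy⟩, hc⟩
    simp only [mem_preimage, mem_Iic, Afun] at hc
    simp only [mem_Icc, Prod.mk_le_mk]
    exact ⟨⟨hx, hy⟩, by nlinarith, by nlinarith⟩
  have hScomp : IsCompact S := isCompact_Icc.of_isClosed_subset hScl hSsub
  obtain ⟨q, hqS, hqmin⟩ := hScomp.exists_isMinOn ⟨p₀, hp₀S⟩ hfc.continuousOn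
  refine ⟨Afun m₁ m₂ q, ⟨q, hqS.1, rfl⟩, ?_⟩
  rintro x ⟨p, hp, rfl⟩
  by_cases hpc : Afun m₁ m₂ p ≤ c
  · exact hqmin ⟨hp, hpc⟩
  · exact le_trans (hqmin hp₀S) (le_of_not_ge hpc)

/-- for `Ω ∈ 𝒮²` and `k ≥ 1`, each `A_{j,k+1−j}` (for `1 ≤ j ≤ k`) attains a
minimum on `Ū_Ω`, and with `a := max_{1≤j≤k} min_{Ū_Ω} A_{j,k+1−j}`, for every
`(m₁,m₂) ∈ ℤ² \ (ℤ_{≤0})²` with `m₁+m₂ ≤ k+1` and every `ε > 0` there is `p ∈ Ū_Ω`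
with `A_{m₁,m₂}(p) < a + ε`. -/
theorem stmt8 (Ω : Set Pt) (r : Pt → ℝ) (hΩ : IsToricBase Ω r) (k : ℤ) (hk : 1 ≤ k) :
    (∀ j : ℤ, 1 ≤ j → j ≤ k →
      ∃ x : ℝ, IsLeast ((fun p => Afun j (k + 1 - j) p) '' UBar Ω) x) ∧
    ∀ a : ℝ,
      IsGreatest {x | ∃ j : ℤ, 1 ≤ j ∧ j ≤ k ∧
          IsLeast ((fun p => Afun j (k + 1 - j) p) '' UBar Ω) x} a →
      ∀ m₁ m₂ : ℤ, ¬(m₁ ≤ 0 ∧ m₂ ≤ 0) → m₁ + m₂ ≤ k + 1 →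
        ∀ ε : ℝ, 0 < ε → ∃ p ∈ UBar Ω, Afun m₁ m₂ p < a + ε := by
  -- get a bound M on r over Σ²
  have h10 : ((1:ℝ), (0:ℝ)) ∈ Sigma2 := ⟨by norm_num, by norm_num, by norm_num⟩
  obtain ⟨z₀, hz₀, hmax⟩ := stmt8_isCompact_Sigma2.exists_isMaxOn ⟨_, h10⟩ hΩ.1.continuousOn
  set M : ℝ := r z₀ with hMdef
  have hM : ∀ z ∈ Sigma2, r z ≤ M := fun z hz => hmax hz
  have hM0 : 0 ≤ M := (hΩ.2.1 z₀ hz₀).le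
  constructor
  · intro j hj1 hjk
    exact stmt8_min Ω r hΩ M hM hM0 j (k+1-j) hj1 (by omega)
  · intro a ha m₁ m₂ hm hsum ε hε
    -- a ≥ 0
    have ha0 : 0 ≤ a := by
      obtain ⟨j, hj1, hjk, hleast⟩ := ha.1
      obtain ⟨p, hp, hpa⟩ := hleast.1
      have hj1' : (1:ℝ) ≤ (j:ℝ) := by exact_mod_cast hj1
      have hj2' : (1:ℝ) ≤ ((k+1-j:ℤ):ℝ) := by exact_mod_cast (by omega : (1:ℤ) ≤ k+1-j)
      obtain ⟨hpx, hpy⟩ := hp.2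
      simp only [Afun] at hpa
      rw [← hpa]
      nlinarith
    by_cases hm1 : m₁ ≤ 0
    · have hp := (stmt8_axis Ω r hΩ M hM hM0 (M+1) (by linarith)).1
      refine ⟨(M+1, 0), hp, ?_⟩
      have hm1' : (m₁:ℝ) ≤ 0 := by exact_mod_cast hm1
      simp only [Afun]
      nlinarith
    · by_cases hm2 : m₂ ≤ 0
      · have hp := (stmt8_axis Ω r hΩ M hM hM0 (M+1) (by linarith)).2
        refine ⟨(0, M+1), hp, ?_⟩
        have hm2' : (m₂:ℝ) ≤ 0 := by exact_mod_cast hm2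
        simp only [Afun]
        nlinarith
      · push_neg at hm1 hm2
        have hm1' : 1 ≤ m₁ := hm1
        have hm2' : 1 ≤ m₂ := hm2
        obtain ⟨x, hx⟩ := stmt8_min Ω r hΩ M hM hM0 m₁ (k+1-m₁) hm1' (by omega)
        have hxa : x ≤ a := ha.2 ⟨m₁, hm1', by omega, hx⟩
        obtain ⟨p, hp, hpx⟩ := hx.1
        refine ⟨p, hp, ?_⟩
        have hpy : 0 ≤ p.2 := hp.2.2
        have hmle : (m₂:ℝ) ≤ ((k+1-m₁:ℤ):ℝ) := by exact_mod_cast (by omega : m₂ ≤ k+1-m₁)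
        simp only [Afun] at hpx ⊢
        have : (m₁:ℝ) * p.1 + (m₂:ℝ) * p.2 ≤ (m₁:ℝ) * p.1 + ((k+1-m₁:ℤ):ℝ) * p.2 := by
          nlinarith
        linarith [hpx ▸ this, hxa]

end
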